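/- Affine reduction →_aff on FMC terms is terminating (strongly normalizing: there is no infinite sequence of →_aff-steps) and confluent. -/

import Mathlib

variable {Loc Ch : Type}

/-- FMC terms: variable, push `[N]a.M`, pop `a<x>.M` (de Bruijn binder),
choice `i`, case `M ; i -> N`, and loop `M^i`. -/
inductive Tm (Loc Ch : Type) : Type where
  | var : ℕ → Tm Loc Ch
  | push : Tm Loc Ch → Loc → Tm Loc Ch → Tm Loc Ch
  | pop : Loc → Tm Loc Ch → Tm Loc Ch
  | choice : Ch → Tm Loc Ch
  | caseOf : Tm Loc Ch → Ch → Tm Loc Ch → Tm Loc Ch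
  | loop : Tm Loc Ch → Ch → Tm Loc Ch

namespace Tm

/-- Shift the free de Bruijn indices `≥ d` up by one. -/
def lift : Tm Loc Ch → ℕ → Tm Loc Ch
  | var n, d => if n < d then var n else var (n + 1)
  | push N a M, d => push (N.lift d) a (M.lift d)
  | pop a M, d => pop a (M.lift (d + 1))
  | choice i, _ => choice i
  | caseOf M i N, d => caseOf (M.lift d) i (N.lift d)
  | loop M i, d => loop (M.lift d) i

/-- Capture-avoiding substitution `{N/k}M` for the de Bruijn index `k`. -/
def subst : Tm Loc Ch → ℕ → Tm Loc Ch → Tm Loc Ch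
  | var n, k, N => if n = k then N else if n < k then var n else var (n - 1)
  | push P a M, k, N => push (P.subst k N) a (M.subst k N)
  | pop a M, k, N => pop a (M.subst (k + 1) (N.lift 0))
  | choice i, _, _ => choice i
  | caseOf M i P, k, N => caseOf (M.subst k N) i (P.subst k N)
  | loop M i, k, N => loop (M.subst k N) i

end Tm

/-- Affine reduction: the contextual closure of the rules passage, select,
reject, prefix(pop), prefix(push), associate. -/
inductive AffStep : Tm Loc Ch → Tm Loc Ch → Prop where
  | passage (N : Tm Loc Ch) (a b : Loc) (M : Tm Loc Ch) (h : a ≠ b) :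
      AffStep (.push N b (.pop a M)) (.pop a (.push (N.lift 0) b M))
  | select (i : Ch) (M : Tm Loc Ch) :
      AffStep (.caseOf (.choice i) i M) M
  | reject (i j : Ch) (M : Tm Loc Ch) (h : i ≠ j) :
      AffStep (.caseOf (.choice i) j M) (.choice i)
  | prefixPop (a : Loc) (N : Tm Loc Ch) (i : Ch) (M : Tm Loc Ch) :
      AffStep (.caseOf (.pop a N) i M) (.pop a (.caseOf N i (M.lift 0)))
  | prefixPush (P : Tm Loc Ch) (a : Loc) (N : Tm Loc Ch) (i : Ch) (M : Tm Loc Ch) :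
      AffStep (.caseOf (.push P a N) i M) (.push P a (.caseOf N i M))
  | assoc (P : Tm Loc Ch) (i : Ch) (N M : Tm Loc Ch) :
      AffStep (.caseOf (.caseOf P i N) i M) (.caseOf P i (.caseOf N i M))
  | push_left (N N' : Tm Loc Ch) (a : Loc) (M : Tm Loc Ch) :
      AffStep N N' → AffStep (.push N a M) (.push N' a M)
  | push_right (N : Tm Loc Ch) (a : Loc) (M M' : Tm Loc Ch) :
      AffStep M M' → AffStep (.push N a M) (.push N a M')
  | pop_body (a : Loc) (M M' : Tm Loc Ch) :
      AffStep M M' → AffStep (.pop a M) (.pop a M')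
  | case_left (M M' : Tm Loc Ch) (i : Ch) (N : Tm Loc Ch) :
      AffStep M M' → AffStep (.caseOf M i N) (.caseOf M' i N)
  | case_right (M : Tm Loc Ch) (i : Ch) (N N' : Tm Loc Ch) :
      AffStep N N' → AffStep (.caseOf M i N) (.caseOf M i N')
  | loop_body (M M' : Tm Loc Ch) (i : Ch) :
      AffStep M M' → AffStep (.loop M i) (.loop M' i)

/-!
The weight `Tm.weight` is a polynomial interpretation that every rule strictly decreases, so
`→_aff` terminates. All critical pairs close in at most two steps on each side, so `→_aff` is
locally confluent, and Newman's lemma upgrades this to confluence.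
-/

open Relation

theorem Relation.Join.reflTransGen_lift {α β : Type*} {r : α → α → Prop}
    {s : β → β → Prop} {a b : α} (h : Join (ReflTransGen r) a b) (f : α → β)
    (hf : ∀ a b, r a b → s (f a) (f b)) : Join (ReflTransGen s) (f a) (f b) :=
  let ⟨c, hac, hbc⟩ := h
  ⟨f c, hac.lift f hf, hbc.lift f hf⟩

theorem Relation.newman {α : Type*} {r : α → α → Prop} (hwf : WellFounded (flip r))
    (hlc : ∀ {a b c}, r a b → r a c → Join (ReflTransGen r) b c) {a b c : α}
    (hab : ReflTransGen r a b) (hac : ReflTransGen r a c) : Join (ReflTransGen r) b c := by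
  induction a using hwf.induction generalizing b c with
  | _ a ih =>
    rcases hab.cases_head with rfl | ⟨b₁, hab₁, hb₁b⟩
    · exact ⟨c, hac, .refl⟩
    rcases hac.cases_head with rfl | ⟨c₁, hac₁, hc₁c⟩
    · exact ⟨b, .refl, hab⟩
    obtain ⟨d, hb₁d, hc₁d⟩ := hlc hab₁ hac₁
    obtain ⟨e, hbe, hde⟩ := ih b₁ hab₁ hb₁b hb₁d
    obtain ⟨f, hcf, hef⟩ := ih c₁ hac₁ hc₁c (hc₁d.trans hde)
    exact ⟨f, hbe.trans hef, hcf⟩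

namespace Tm

/-- Pushing counts the continuation twice so that `passage` decreases the weight; `caseOf` is
multiplicative so that the rules moving a case inwards decrease it. -/
def weight : Tm Loc Ch → ℕ
  | var _ => 1
  | choice _ => 1
  | push N _ M => weight N + 2 * weight M + 1
  | pop _ M => weight M + 1
  | caseOf M _ N => weight M * (weight N + 2)
  | loop M _ => weight M + 1

theorem one_le_weight (M : Tm Loc Ch) : 1 ≤ M.weight := by
  induction M <;> simp only [weight] <;> nlinarith

theorem weight_lift (M : Tm Loc Ch) (d : ℕ) : (M.lift d).weight = M.weight := by
  induction M generalizing d <;> simp only [lift, weight, *]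
  split <;> rfl

theorem lift_lift_of_le (M : Tm Loc Ch) {d d' : ℕ} (h : d ≤ d') :
    (M.lift d).lift (d' + 1) = (M.lift d').lift d := by
  induction M generalizing d d' with
  | var n => grind [lift]
  | pop a M ih => simp [lift, ih (Nat.succ_le_succ h)]
  | _ => simp [lift, *]

end Tm

namespace AffStep

theorem lift {M N : Tm Loc Ch} (h : AffStep M N) (d : ℕ) : AffStep (M.lift d) (N.lift d) := by
  induction h generalizing d <;> simp only [Tm.lift]
  case passage N _ _ _ hne =>
    rw [N.lift_lift_of_le (Nat.zero_le d)]
    exact .passage _ _ _ _ hne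
  case prefixPop _ _ _ M =>
    rw [M.lift_lift_of_le (Nat.zero_le d)]
    exact .prefixPop _ _ _ _
  case select => exact .select _ _
  case reject hne => exact .reject _ _ _ hne
  case prefixPush => exact .prefixPush _ _ _ _ _
  case assoc => exact .assoc _ _ _ _
  case push_left ih => exact .push_left _ _ _ _ (ih d)
  case push_right ih => exact .push_right _ _ _ _ (ih d)
  case pop_body ih => exact .pop_body _ _ _ (ih (d + 1))
  case case_left ih => exact .case_left _ _ _ _ (ih d)
  case case_right ih => exact .case_right _ _ _ _ (ih d)
  case loop_body ih => exact .loop_body _ _ _ (ih d)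

theorem weight_lt {M N : Tm Loc Ch} (h : AffStep M N) : N.weight < M.weight := by
  induction h <;> simp only [Tm.weight, Tm.weight_lift]
  case passage | push_left | push_right | pop_body | loop_body => omega
  case select M => nlinarith [M.one_le_weight]
  case reject M _ => nlinarith [M.one_le_weight]
  case prefixPop N _ M => nlinarith [N.one_le_weight, M.one_le_weight]
  case prefixPush P _ N _ M => nlinarith [P.one_le_weight, N.one_le_weight, M.one_le_weight]
  case assoc P _ N M => nlinarith [P.one_le_weight, N.one_le_weight, M.one_le_weight]
  case case_left N _ _ => nlinarith [N.one_le_weight]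
  case case_right M _ _ _ _ _ => nlinarith [M.one_le_weight]

theorem wellFounded_flip : WellFounded (flip (@AffStep Loc Ch)) :=
  Subrelation.wf (fun h => weight_lt h) (InvImage.wf Tm.weight wellFounded_lt)

variable {N M P c : Tm Loc Ch} {a b : Loc} {i : Ch}

theorem join_passage (hab : a ≠ b) (h : AffStep (.push N b (.pop a M)) c) :
    Join (ReflTransGen AffStep) (.pop a (.push (N.lift 0) b M)) c := by
  cases h with
  | passage => exact ⟨_, .refl, .refl⟩
  | push_left _ N' _ _ hN =>
    exact ⟨.pop a (.push (N'.lift 0) b M),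
      .single (.pop_body _ _ _ (.push_left _ _ _ _ (hN.lift 0))), .single (.passage _ _ _ _ hab)⟩
  | push_right _ _ _ _ h =>
    cases h with
    | pop_body _ _ M' hM =>
      exact ⟨.pop a (.push (N.lift 0) b M'),
        .single (.pop_body _ _ _ (.push_right _ _ _ _ hM)), .single (.passage _ _ _ _ hab)⟩

theorem join_select (h : AffStep (.caseOf (.choice i) i M) c) :
    Join (ReflTransGen AffStep) M c := by
  cases h with
  | select => exact ⟨_, .refl, .refl⟩
  | reject _ _ _ hii => exact absurd rfl hii
  | case_left _ _ _ _ h => cases h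
  | case_right _ _ _ M' hM => exact ⟨M', .single hM, .single (.select _ _)⟩

theorem join_reject {j : Ch} (hij : i ≠ j) (h : AffStep (.caseOf (.choice i) j M) c) :
    Join (ReflTransGen AffStep) (.choice i) c := by
  cases h with
  | select => exact absurd rfl hij
  | reject => exact ⟨_, .refl, .refl⟩
  | case_left _ _ _ _ h => cases h
  | case_right => exact ⟨.choice i, .refl, .single (.reject _ _ _ hij)⟩

theorem join_prefixPop (h : AffStep (.caseOf (.pop a N) i M) c) :
    Join (ReflTransGen AffStep) (.pop a (.caseOf N i (M.lift 0))) c := by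
  cases h with
  | prefixPop => exact ⟨_, .refl, .refl⟩
  | case_left _ _ _ _ h =>
    cases h with
    | pop_body _ _ N' hN =>
      exact ⟨.pop a (.caseOf N' i (M.lift 0)),
        .single (.pop_body _ _ _ (.case_left _ _ _ _ hN)), .single (.prefixPop _ _ _ _)⟩
  | case_right _ _ _ M' hM =>
    exact ⟨.pop a (.caseOf N i (M'.lift 0)),
      .single (.pop_body _ _ _ (.case_right _ _ _ _ (hM.lift 0))), .single (.prefixPop _ _ _ _)⟩

theorem join_prefixPush (h : AffStep (.caseOf (.push P a N) i M) c) :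
    Join (ReflTransGen AffStep) (.push P a (.caseOf N i M)) c := by
  cases h with
  | prefixPush => exact ⟨_, .refl, .refl⟩
  | case_left _ _ _ _ h =>
    cases h with
    | passage _ b _ Q hba =>
      exact ⟨.pop b (.push (P.lift 0) a (.caseOf Q i (M.lift 0))),
        .head (.push_right _ _ _ _ (.prefixPop _ _ _ _)) (.single (.passage _ _ _ _ hba)),
        .head (.prefixPop _ _ _ _) (.single (.pop_body _ _ _ (.prefixPush _ _ _ _ _)))⟩
    | push_left _ P' _ _ hP =>
      exact ⟨.push P' a (.caseOf N i M),
        .single (.push_left _ _ _ _ hP), .single (.prefixPush _ _ _ _ _)⟩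
    | push_right _ _ _ N' hN =>
      exact ⟨.push P a (.caseOf N' i M),
        .single (.push_right _ _ _ _ (.case_left _ _ _ _ hN)), .single (.prefixPush _ _ _ _ _)⟩
  | case_right _ _ _ M' hM =>
    exact ⟨.push P a (.caseOf N i M'),
      .single (.push_right _ _ _ _ (.case_right _ _ _ _ hM)), .single (.prefixPush _ _ _ _ _)⟩

theorem join_assoc (h : AffStep (.caseOf (.caseOf P i N) i M) c) :
    Join (ReflTransGen AffStep) (.caseOf P i (.caseOf N i M)) c := by
  cases h with
  | assoc => exact ⟨_, .refl, .refl⟩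
  | case_left _ _ _ _ h =>
    cases h with
    | select => exact ⟨.caseOf N i M, .single (.select _ _), .refl⟩
    | reject j _ _ hji =>
      exact ⟨.choice j, .single (.reject _ _ _ hji), .single (.reject _ _ _ hji)⟩
    | prefixPop b Q =>
      exact ⟨.pop b (.caseOf Q i (.caseOf (N.lift 0) i (M.lift 0))),
        .single (.prefixPop _ _ _ _),
        .head (.prefixPop _ _ _ _) (.single (.pop_body _ _ _ (.assoc _ _ _ _)))⟩
    | prefixPush R b Q =>
      exact ⟨.push R b (.caseOf Q i (.caseOf N i M)),
        .single (.prefixPush _ _ _ _ _),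
        .head (.prefixPush _ _ _ _ _) (.single (.push_right _ _ _ _ (.assoc _ _ _ _)))⟩
    | assoc R _ Q =>
      exact ⟨.caseOf R i (.caseOf Q i (.caseOf N i M)),
        .single (.assoc _ _ _ _),
        .head (.assoc _ _ _ _) (.single (.case_right _ _ _ _ (.assoc _ _ _ _)))⟩
    | case_left _ P' _ _ hP =>
      exact ⟨.caseOf P' i (.caseOf N i M),
        .single (.case_left _ _ _ _ hP), .single (.assoc _ _ _ _)⟩
    | case_right _ _ _ N' hN =>
      exact ⟨.caseOf P i (.caseOf N' i M),
        .single (.case_right _ _ _ _ (.case_left _ _ _ _ hN)), .single (.assoc _ _ _ _)⟩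
  | case_right _ _ _ M' hM =>
    exact ⟨.caseOf P i (.caseOf N i M'),
      .single (.case_right _ _ _ _ (.case_right _ _ _ _ hM)), .single (.assoc _ _ _ _)⟩

theorem join_of_step {M₁ M₂ : Tm Loc Ch} (h₁ : AffStep M M₁) (h₂ : AffStep M M₂) :
    Join (ReflTransGen AffStep) M₁ M₂ := by
  induction h₁ generalizing M₂ with
  | passage _ _ _ _ hab => exact join_passage hab h₂
  | select => exact join_select h₂
  | reject _ _ _ hij => exact join_reject hij h₂
  | prefixPop => exact join_prefixPop h₂
  | prefixPush => exact join_prefixPush h₂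
  | assoc => exact join_assoc h₂
  | push_left N N' a M hN ih =>
    cases h₂ with
    | passage _ _ _ _ hab => exact symm (join_passage hab (.push_left _ _ _ _ hN))
    | push_left _ _ _ _ hN₂ =>
      exact (ih hN₂).reflTransGen_lift (Tm.push · a M) fun _ _ => AffStep.push_left _ _ _ _
    | push_right _ _ _ M' hM =>
      exact ⟨.push N' a M', .single (.push_right _ _ _ _ hM), .single (.push_left _ _ _ _ hN)⟩
  | push_right N a M M' hM ih =>
    cases h₂ with
    | passage _ _ _ _ hab => exact symm (join_passage hab (.push_right _ _ _ _ hM))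
    | push_left _ N' _ _ hN =>
      exact ⟨.push N' a M', .single (.push_left _ _ _ _ hN), .single (.push_right _ _ _ _ hM)⟩
    | push_right _ _ _ _ hM₂ =>
      exact (ih hM₂).reflTransGen_lift (Tm.push N a ·) fun _ _ => AffStep.push_right _ _ _ _
  | pop_body a M M' hM ih =>
    cases h₂ with
    | pop_body _ _ _ hM₂ =>
      exact (ih hM₂).reflTransGen_lift (Tm.pop a ·) fun _ _ => AffStep.pop_body _ _ _
  | case_left M M' i N hM ih =>
    cases h₂ with
    | select | reject => cases hM
    | prefixPop => exact symm (join_prefixPop (.case_left _ _ _ _ hM))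
    | prefixPush => exact symm (join_prefixPush (.case_left _ _ _ _ hM))
    | assoc => exact symm (join_assoc (.case_left _ _ _ _ hM))
    | case_left _ _ _ _ hM₂ =>
      exact (ih hM₂).reflTransGen_lift (Tm.caseOf · i N) fun _ _ => AffStep.case_left _ _ _ _
    | case_right _ _ _ N' hN =>
      exact ⟨.caseOf M' i N', .single (.case_right _ _ _ _ hN), .single (.case_left _ _ _ _ hM)⟩
  | case_right M i N N' hN ih =>
    cases h₂ with
    | select => exact symm (join_select (.case_right _ _ _ _ hN))
    | reject _ _ _ hij => exact symm (join_reject hij (.case_right _ _ _ _ hN))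
    | prefixPop => exact symm (join_prefixPop (.case_right _ _ _ _ hN))
    | prefixPush => exact symm (join_prefixPush (.case_right _ _ _ _ hN))
    | assoc => exact symm (join_assoc (.case_right _ _ _ _ hN))
    | case_left _ M' _ _ hM =>
      exact ⟨.caseOf M' i N', .single (.case_left _ _ _ _ hM), .single (.case_right _ _ _ _ hN)⟩
    | case_right _ _ _ _ hN₂ =>
      exact (ih hN₂).reflTransGen_lift (Tm.caseOf M i ·) fun _ _ => AffStep.case_right _ _ _ _
  | loop_body M M' i hM ih =>
    cases h₂ with
    | loop_body _ _ _ hM₂ =>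
      exact (ih hM₂).reflTransGen_lift (Tm.loop · i) fun _ _ => AffStep.loop_body _ _ _

end AffStep

/-- Affine reduction is terminating (strongly normalizing) and confluent. -/
theorem aff_terminating_and_confluent (Loc Ch : Type) :
    (¬ ∃ f : ℕ → Tm Loc Ch, ∀ n, AffStep (f n) (f (n + 1))) ∧
    (∀ M N P : Tm Loc Ch, Relation.ReflTransGen AffStep M N →
      Relation.ReflTransGen AffStep M P →
      ∃ Q : Tm Loc Ch, Relation.ReflTransGen AffStep N Q ∧ Relation.ReflTransGen AffStep P Q) :=
  ⟨fun ⟨f, hf⟩ =>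
    (wellFounded_iff_isEmpty_descending_chain.mp AffStep.wellFounded_flip).false ⟨f, hf⟩,
    fun _ _ _ => newman AffStep.wellFounded_flip AffStep.join_of_step⟩
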